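/- Fix α > 0. The map t ↦ ρ_α(t, y) := π(t)^{1+α} + (1-π(t))^{1+α} - (1+1/α)(y π(t)^α + (1-y)(1-π(t))^α), with π(t) = e^t/(1+e^t) and y ∈ {0,1}, is Lipschitz continuous on ℝ: there exists L > 0 (e.g., L = 2(α+1)) such that |ρ_α(t₁,y) - ρ_α(t₂,y)| ≤ L|t₁ - t₂| for all t₁, t₂ ∈ ℝ. -/

import Mathlib

noncomputable def logisticFun (t : ℝ) : ℝ := Real.exp t / (1 + Real.exp t)

noncomputable def rhoDPD (α t y : ℝ) : ℝ :=
  logisticFun t ^ (1 + α) + (1 - logisticFun t) ^ (1 + α)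
    - (1 + 1 / α) * (y * logisticFun t ^ α + (1 - y) * (1 - logisticFun t) ^ α)

lemma logistic_pos (t : ℝ) : 0 < logisticFun t := by
  unfold logisticFun
  positivity

lemma logistic_lt_one (t : ℝ) : logisticFun t < 1 := by
  unfold logisticFun
  rw [div_lt_one (by positivity)]
  linarith [Real.exp_pos t]

lemma hasDerivAt_logistic (t : ℝ) :
    HasDerivAt logisticFun (logisticFun t * (1 - logisticFun t)) t := by
  have h : HasDerivAt (fun t => Real.exp t / (1 + Real.exp t))
      ((Real.exp t * (1 + Real.exp t) - Real.exp t * (0 + Real.exp t)) / (1 + Real.exp t) ^ 2) t :=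
    (Real.hasDerivAt_exp t).div ((hasDerivAt_const t 1).add (Real.hasDerivAt_exp t))
      (by positivity)
  convert h using 1
  · rfl
  unfold logisticFun
  have h1 : (0:ℝ) < 1 + Real.exp t := by positivity
  field_simp
  ring

lemma hasDerivAt_rho (α y : ℝ) (hα : 0 < α) (t : ℝ) :
    HasDerivAt (fun t => rhoDPD α t y)
      ((1 + α) * (logisticFun t ^ α * ((logisticFun t) * (1 - logisticFun t))
        - (1 - logisticFun t) ^ α * ((logisticFun t) * (1 - logisticFun t))
        - y * (logisticFun t ^ α * (1 - logisticFun t))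
        + (1 - y) * ((1 - logisticFun t) ^ α * logisticFun t))) t := by
  set p := logisticFun t with hp
  have hp0 : 0 < p := logistic_pos t
  have hp1 : p < 1 := logistic_lt_one t
  have hq0 : 0 < 1 - p := by linarith
  have hd : HasDerivAt logisticFun (p * (1 - p)) t := hasDerivAt_logistic t
  have hdq : HasDerivAt (fun t => 1 - logisticFun t) (0 - p * (1 - p)) t :=
    (hasDerivAt_const t 1).sub hd
  have h1 : HasDerivAt (fun t => logisticFun t ^ (1 + α))
      (p * (1 - p) * (1 + α) * p ^ (1 + α - 1)) t :=
    hd.rpow_const (Or.inl hp0.ne')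
  have h2 : HasDerivAt (fun t => (1 - logisticFun t) ^ (1 + α))
      ((0 - p * (1 - p)) * (1 + α) * (1 - p) ^ (1 + α - 1)) t :=
    hdq.rpow_const (Or.inl hq0.ne')
  have h3 : HasDerivAt (fun t => logisticFun t ^ α)
      (p * (1 - p) * α * p ^ (α - 1)) t := hd.rpow_const (Or.inl hp0.ne')
  have h4 : HasDerivAt (fun t => (1 - logisticFun t) ^ α)
      ((0 - p * (1 - p)) * α * (1 - p) ^ (α - 1)) t := hdq.rpow_const (Or.inl hq0.ne')
  have H := ((h1.add h2).sub
    (((h3.const_mul y).add (h4.const_mul (1 - y))).const_mul (1 + 1 / α)))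
  refine H.congr_deriv ?_
  have e1 : p ^ (1 + α - 1) = p ^ α := by ring_nf
  have e2 : (1 - p) ^ (1 + α - 1) = (1 - p) ^ α := by ring_nf
  have e3 : p ^ (α - 1) * p = p ^ α := by
    rw [← Real.rpow_add_one hp0.ne']; ring_nf
  have e4 : (1 - p) ^ (α - 1) * (1 - p) = (1 - p) ^ α := by
    rw [← Real.rpow_add_one hq0.ne']; ring_nf
  have hαne : α ≠ 0 := hα.ne'
  have e3' : p ^ (α - 1) = p ^ α / p := (eq_div_iff hp0.ne').2 e3
  have e4' : (1 - p) ^ (α - 1) = (1 - p) ^ α / (1 - p) := (eq_div_iff hq0.ne').2 e4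
  rw [e1, e2, e3', e4']
  field_simp
  ring

theorem rhoDPD_lipschitz (α y : ℝ) (hα : 0 < α) (hy : y ∈ ({0, 1} : Set ℝ)) :
    ∃ L > (0 : ℝ), ∀ t₁ t₂ : ℝ, |rhoDPD α t₁ y - rhoDPD α t₂ y| ≤ L * |t₁ - t₂| := by
  refine ⟨4 * (1 + α), by positivity, fun t₁ t₂ => ?_⟩
  set f' : ℝ → ℝ := fun t =>
      (1 + α) * (logisticFun t ^ α * ((logisticFun t) * (1 - logisticFun t))
        - (1 - logisticFun t) ^ α * ((logisticFun t) * (1 - logisticFun t))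
        - y * (logisticFun t ^ α * (1 - logisticFun t))
        + (1 - y) * ((1 - logisticFun t) ^ α * logisticFun t)) with hf'
  have key := Convex.norm_image_sub_le_of_norm_hasDerivWithin_le
    (f := fun t => rhoDPD α t y) (f' := f') (C := 4 * (1 + α)) (s := Set.univ)
    (fun x _ => (hasDerivAt_rho α y hα x).hasDerivWithinAt)
    (fun x _ => ?_) convex_univ (Set.mem_univ t₂) (Set.mem_univ t₁)
  · simpa [Real.norm_eq_abs] using key
  · set p := logisticFun x with hp
    have hp0 : 0 < p := logistic_pos x
    have hp1 : p < 1 := logistic_lt_one x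
    have hq0 : 0 < 1 - p := by linarith
    have hpa : 0 < p ^ α := Real.rpow_pos_of_pos hp0 α
    have hpa1 : p ^ α ≤ 1 := Real.rpow_le_one hp0.le hp1.le hα.le
    have hqa : 0 < (1 - p) ^ α := Real.rpow_pos_of_pos hq0 α
    have hqa1 : (1 - p) ^ α ≤ 1 := Real.rpow_le_one hq0.le (by linarith) hα.le
    rw [Real.norm_eq_abs, hf']
    have h1 : (0:ℝ) < 1 + α := by linarith
    rw [abs_mul, abs_of_pos h1]
    have : |p ^ α * (p * (1 - p)) - (1 - p) ^ α * (p * (1 - p))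
        - y * (p ^ α * (1 - p)) + (1 - y) * ((1 - p) ^ α * p)| ≤ 4 := by
      rcases hy with hy | hy <;> rw [hy] <;> rw [abs_le] <;> constructor <;>
        nlinarith [mul_pos hp0 hq0, mul_le_one₀ hpa1 (mul_pos hp0 hq0).le
          (by nlinarith : p * (1 - p) ≤ 1), hpa.le, hqa.le]
    nlinarith [abs_nonneg (p ^ α * (p * (1 - p)) - (1 - p) ^ α * (p * (1 - p))
        - y * (p ^ α * (1 - p)) + (1 - y) * ((1 - p) ^ α * p))]
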